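/- For Fibonacci quaternions and n ≥ 1, Q_n² + Q_{n−1}² = 2 Q_{2n−1} − 3 L_{2n+2}, where L_{2n+2} is regarded as a real scalar. -/

import Mathlib

open Quaternion TrivSqZeroExt DualNumber

noncomputable section

/-- The n-th Fibonacci quaternion Q_n = F_n + i F_{n+1} + j F_{n+2} + k F_{n+3}. -/
def fibQ (n : ℕ) : ℍ[ℝ] :=
  ⟨Nat.fib n, Nat.fib (n+1), Nat.fib (n+2), Nat.fib (n+3)⟩

/-- Lucas numbers: L_0 = 2, L_1 = 1. -/
def lucas : ℕ → ℕ
  | 0 => 2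
  | 1 => 1
  | n + 2 => lucas n + lucas (n+1)

/-- The n-th Lucas quaternion K_n = L_n + i L_{n+1} + j L_{n+2} + k L_{n+3}. -/
def lucasQ (n : ℕ) : ℍ[ℝ] :=
  ⟨lucas n, lucas (n+1), lucas (n+2), lucas (n+3)⟩

/-- The n-th dual Fibonacci quaternion Q̃_n = Q_n + ε Q_{n+1}. -/
def dQ (n : ℕ) : DualNumber ℍ[ℝ] := inl (fibQ n) + inl (fibQ (n+1)) * ε

/-- The n-th dual Lucas quaternion K̃_n = K_n + ε K_{n+1}. -/
def dK (n : ℕ) : DualNumber ℍ[ℝ] := inl (lucasQ n) + inl (lucasQ (n+1)) * ε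

/-- Conjugate of the dual Fibonacci quaternion (componentwise quaternion conjugation). -/
def dQconj (n : ℕ) : DualNumber ℍ[ℝ] := inl (star (fibQ n)) + inl (star (fibQ (n+1))) * ε

/-- The dual Fibonacci number F̃_n = F_n + ε F_{n+1} as a scalar dual quaternion. -/
def dF (n : ℕ) : DualNumber ℍ[ℝ] :=
  inl ((Nat.fib n : ℝ) : ℍ[ℝ]) + inl ((Nat.fib (n+1) : ℝ) : ℍ[ℝ]) * ε

/-- The dual Lucas number L̃_n = L_n + ε L_{n+1} as a scalar dual quaternion. -/
def dL (n : ℕ) : DualNumber ℍ[ℝ] :=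
  inl ((lucas n : ℝ) : ℍ[ℝ]) + inl ((lucas (n+1) : ℝ) : ℍ[ℝ]) * ε

def qi : ℍ[ℝ] := ⟨0,1,0,0⟩
def qj : ℍ[ℝ] := ⟨0,0,1,0⟩
def qk : ℍ[ℝ] := ⟨0,0,0,1⟩

/-!
Every quaternion satisfies `q ^ 2 = 2 Re(q) q - |q|²`, so
`Q_n² + Q_{n-1}² = 2 (F_n Q_n + F_{n-1} Q_{n-1}) - (|Q_n|² + |Q_{n-1}|²)`.
Componentwise, the addition formula `F_{m+k+1} = F_m F_k + F_{m+1} F_{k+1}` turns the first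
bracket into `Q_{2n-1}`, while `F_k² + F_{k+1}² = F_{2k+1}`, `L_{k+1} = F_k + F_{k+2}` and
`L_k + L_{k+4} = 3 L_{k+2}` turn the second into `3 L_{2n+2}`.
-/

theorem Quaternion.sq_eq_two_re_smul_sub_normSq {R : Type*} [CommRing R] (q : ℍ[R]) :
    q ^ 2 = (2 * q.re) • q - ((normSq q : R) : ℍ[R]) := by
  rw [← self_mul_star, star_eq_two_re_sub, mul_sub, mul_coe_eq_smul, sub_sub_cancel, sq]

theorem lucas_succ_eq_fib_add_fib (k : ℕ) : lucas (k + 1) = Nat.fib k + Nat.fib (k + 2) := by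
  induction k using Nat.twoStepInduction with
  | zero => rfl
  | one => rfl
  | more k ih₀ ih₁ =>
    rw [lucas, ih₀, ih₁, Nat.fib_add_two (n := k + 2), Nat.fib_add_two (n := k + 1),
      Nat.fib_add_two (n := k)]
    ring

theorem lucas_add_lucas_add_four (k : ℕ) : lucas k + lucas (k + 4) = 3 * lucas (k + 2) := by
  induction k using Nat.twoStepInduction with
  | zero => rfl
  | one => rfl
  | more k ih₀ ih₁ =>
    simp only [lucas] at *
    omega

@[simp] theorem fibQ_re (n : ℕ) : (fibQ n).re = Nat.fib n := rfl
@[simp] theorem fibQ_imI (n : ℕ) : (fibQ n).imI = Nat.fib (n + 1) := rfl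
@[simp] theorem fibQ_imJ (n : ℕ) : (fibQ n).imJ = Nat.fib (n + 2) := rfl
@[simp] theorem fibQ_imK (n : ℕ) : (fibQ n).imK = Nat.fib (n + 3) := rfl

theorem fib_mul_fib_add_fib_succ_mul (m k : ℕ) :
    Nat.fib m * Nat.fib (m + k) + Nat.fib (m + 1) * Nat.fib (m + 1 + k) =
      Nat.fib (2 * m + 1 + k) := by
  rw [show 2 * m + 1 + k = m + (m + k) + 1 by ring, Nat.fib_add, Nat.add_right_comm]

theorem fib_smul_fibQ_add_fib_succ_smul_fibQ_succ (m : ℕ) :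
    (Nat.fib m : ℝ) • fibQ m + (Nat.fib (m + 1) : ℝ) • fibQ (m + 1) = fibQ (2 * m + 1) := by
  ext <;> simp only [Quaternion.re_add, Quaternion.imI_add, Quaternion.imJ_add, Quaternion.imK_add,
    Quaternion.re_smul, Quaternion.imI_smul, Quaternion.imJ_smul, Quaternion.imK_smul, smul_eq_mul,
    fibQ_re, fibQ_imI, fibQ_imJ, fibQ_imK] <;> norm_cast
  exacts [fib_mul_fib_add_fib_succ_mul m 0, fib_mul_fib_add_fib_succ_mul m 1,
    fib_mul_fib_add_fib_succ_mul m 2, fib_mul_fib_add_fib_succ_mul m 3]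

theorem normSq_fibQ (m : ℕ) : normSq (fibQ m) = Nat.fib (2 * m + 1) + Nat.fib (2 * m + 5) := by
  rw [normSq_def', fibQ_re, fibQ_imI, fibQ_imJ, fibQ_imK, Nat.fib_two_mul_add_one,
    show 2 * m + 5 = 2 * (m + 2) + 1 by ring, Nat.fib_two_mul_add_one]
  push_cast
  ring

theorem normSq_fibQ_add_normSq_fibQ_succ (m : ℕ) :
    normSq (fibQ m) + normSq (fibQ (m + 1)) = 3 * (lucas (2 * m + 4) : ℝ) := by
  have h₁ := lucas_succ_eq_fib_add_fib (2 * m + 1)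
  have h₅ := lucas_succ_eq_fib_add_fib (2 * m + 5)
  have h₃ := lucas_add_lucas_add_four (2 * m + 2)
  rw [normSq_fibQ, normSq_fibQ]
  ring_nf at h₁ h₅ h₃ ⊢
  exact_mod_cast (by omega : _ = _)

theorem fib_quaternion_sq_sum (n : ℕ) (hn : 1 ≤ n) :
    fibQ n ^ 2 + fibQ (n-1) ^ 2 =
      2 * fibQ (2*n-1) - ((3 * (lucas (2*n+2) : ℝ)) : ℍ[ℝ]) := by
  obtain ⟨m, rfl⟩ : ∃ m, n = m + 1 := ⟨n - 1, by omega⟩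
  have hnormSq : (3 : ℍ[ℝ]) * ((lucas (2 * m + 4) : ℝ) : ℍ[ℝ]) =
      ((normSq (fibQ m) : ℝ) : ℍ[ℝ]) + ((normSq (fibQ (m + 1)) : ℝ) : ℍ[ℝ]) := by
    rw [← Quaternion.coe_add, normSq_fibQ_add_normSq_fibQ_succ, Quaternion.coe_mul]
    rfl
  rw [Nat.add_sub_cancel, show 2 * (m + 1) - 1 = 2 * m + 1 by omega,
    show 2 * (m + 1) + 2 = 2 * m + 4 by ring, hnormSq, two_mul (fibQ _),
    ← fib_smul_fibQ_add_fib_succ_smul_fibQ_succ, Quaternion.sq_eq_two_re_smul_sub_normSq,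
    Quaternion.sq_eq_two_re_smul_sub_normSq, fibQ_re, fibQ_re]
  module
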